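/- arXiv:2108.07053 — 6 statements merged into one kernel-verified Lean document; each statement's English description precedes it below -/
import Mathlib

section
/- Let $\mathcal{X}$, $f$, $C$, $p^w$ be as in the geometric duality setting, with lower image $\mathcal{D} = \{(w,\alpha) \mid w \in C^+, \alpha \leq p^w\}$. If $w \in C^+ \setminus \{0\}$ and $x^w$ is optimal for $\min_{x\in\mathcal{X}} w^\top f(x)$, then $\mathcal{D} \subseteq \{(v,\alpha) \in \mathbb{R}^{q+1} \mid v^\top f(x^w) - \alpha \geq 0\}$ and $(w, p^w)$ lies on the boundary hyperplane $\{(v,\alpha) \mid v^\top f(x^w) - \alpha = 0\}$. -/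
open RealInnerProductSpace

theorem IsMinOn.csInf_image_eq {α β : Type*} [ConditionallyCompleteLattice β] {f : α → β}
    {s : Set α} {a : α} (h : IsMinOn f s a) (ha : a ∈ s) : sInf (f '' s) = f a :=
  IsLeast.csInf_eq ⟨Set.mem_image_of_mem f ha, Set.forall_mem_image.2 h⟩

theorem IsCompact.csInf_image_le {α β : Type*} [TopologicalSpace α]
    [ConditionallyCompleteLinearOrder β] [TopologicalSpace β] [OrderTopology β] [Nonempty β]
    {f : α → β} {K : Set α} {x : α} (hK : IsCompact K) (hf : ContinuousOn f K) (hx : x ∈ K) :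
    sInf (f '' K) ≤ f x :=
  csInf_le (hK.bddBelow_image hf) (Set.mem_image_of_mem f hx)

theorem stmt_6_general (m q : ℕ) (X : Set (Fin m → ℝ))
    (hXcpt : IsCompact X)
    (f : (Fin m → ℝ) → EuclideanSpace ℝ (Fin q)) (hf : ContinuousOn f X)
    (C : Set (EuclideanSpace ℝ (Fin q)))
    (D : Set ((EuclideanSpace ℝ (Fin q)) × ℝ))
    (hD : D = {p | (∀ c ∈ C, 0 ≤ ⟪p.1, c⟫) ∧
      p.2 ≤ sInf ((fun x => ⟪p.1, f x⟫) '' X)})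
    (w : EuclideanSpace ℝ (Fin q))
    (pw : ℝ) (hpw : pw = sInf ((fun x => ⟪w, f x⟫) '' X))
    (xw : Fin m → ℝ) (hxwX : xw ∈ X)
    (hxwopt : ∀ x ∈ X, ⟪w, f xw⟫ ≤ ⟪w, f x⟫) :
    (∀ p ∈ D, 0 ≤ ⟪p.1, f xw⟫ - p.2) ∧ ⟪w, f xw⟫ - pw = 0 := by
  refine ⟨?_, ?_⟩
  · rintro ⟨v, α⟩ hp
    rw [hD] at hp
    have hinf_le : sInf ((fun x => ⟪v, f x⟫) '' X) ≤ ⟪v, f xw⟫ :=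
      hXcpt.csInf_image_le (continuousOn_const.inner hf) hxwX
    linarith [hp.2]
  · rw [hpw, (isMinOn_iff.2 hxwopt).csInf_image_eq hxwX, sub_self]

/-- If `w ∈ C⁺ \ {0}` and `x^w` solves `min_{x ∈ 𝒳} ⟪w, f x⟫`, then the lower image `𝒟`
is contained in the halfspace `{(v, α) | ⟪v, f(x^w)⟫ - α ≥ 0}`, and `(w, p^w)` lies on the
boundary hyperplane `{(v, α) | ⟪v, f(x^w)⟫ - α = 0}`. -/
theorem stmt_6 (m q : ℕ) (X : Set (Fin m → ℝ))
    (hXne : X.Nonempty) (hXcpt : IsCompact X) (hXconv : Convex ℝ X)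
    (f : (Fin m → ℝ) → EuclideanSpace ℝ (Fin q)) (hf : ContinuousOn f X)
    (C : Set (EuclideanSpace ℝ (Fin q)))
    (hCne : C.Nonempty) (hCnetriv : C ≠ Set.univ)
    (hCpointed : ∀ x ∈ C, -x ∈ C → x = 0)
    (hCsolid : (interior C).Nonempty)
    (hCcl : IsClosed C) (hCconv : Convex ℝ C)
    (hCcone : ∀ c ∈ C, ∀ t : ℝ, 0 ≤ t → t • c ∈ C)
    (D : Set ((EuclideanSpace ℝ (Fin q)) × ℝ))
    (hD : D = {p | (∀ c ∈ C, 0 ≤ ⟪p.1, c⟫) ∧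
      p.2 ≤ sInf ((fun x => ⟪p.1, f x⟫) '' X)})
    (w : EuclideanSpace ℝ (Fin q)) (hw : ∀ c ∈ C, 0 ≤ ⟪w, c⟫) (hw0 : w ≠ 0)
    (pw : ℝ) (hpw : pw = sInf ((fun x => ⟪w, f x⟫) '' X))
    (xw : Fin m → ℝ) (hxwX : xw ∈ X)
    (hxwopt : ∀ x ∈ X, ⟪w, f xw⟫ ≤ ⟪w, f x⟫) :
    (∀ p ∈ D, 0 ≤ ⟪p.1, f xw⟫ - p.2) ∧ ⟪w, f xw⟫ - pw = 0 :=
  stmt_6_general m q X hXcpt f hf C D hD w pw hpw xw hxwX hxwopt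
end

section
/- Define $\varphi(y, w, \alpha) = w^\top y - \alpha$, the upper image $\mathcal{P} = f(\mathcal{X}) + C$ and the lower image $\mathcal{D} = \{(w,\alpha) \mid w \in C^+, \alpha \leq \inf_{x\in\mathcal{X}} w^\top f(x)\}$. Then $\mathcal{D} = \{(w,\alpha) \in \mathbb{R}^{q+1} \mid \forall y \in \mathcal{P}: \varphi(y,w,\alpha) \geq 0\}$, i.e., the lower image consists exactly of the pairs $(w,\alpha)$ such that $w^\top y \geq \alpha$ for all $y \in \mathcal{P}$. -/
/-! A functional `⟪w, ·⟫` bounded below on `f(X) + C` must be nonnegative on the cone `C`,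
since otherwise scaling a cone direction drives it to `-∞`; given that, its lower bounds on
`f(X) + C` are those on `f(X) + 0 = f(X)`. Compactness of `f(X)` is what makes `sInf` the
genuine infimum rather than Lean's junk value for sets unbounded below. -/

open RealInnerProductSpace Pointwise

lemma nonneg_of_forall_le_add_mul {a b α : ℝ} (h : ∀ t : ℝ, 0 ≤ t → α ≤ a + t * b) : 0 ≤ b := by
  by_contra! hb
  have hα : α ≤ a := by simpa using h 0 le_rfl
  -- at `t = (a - α + 1) / -b` the right-hand side drops to `α - 1`
  have key := h ((a - α + 1) / -b) (div_nonneg (by linarith) (by linarith))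
  rw [div_mul_eq_mul_div, div_neg, mul_div_assoc, div_self hb.ne, mul_one] at key
  linarith

section InnerProductSpace

variable {E : Type*} [NormedAddCommGroup E] [InnerProductSpace ℝ E]

theorem forall_le_inner_add_iff {S C : Set E} (hS : S.Nonempty) (hC0 : (0 : E) ∈ C)
    (hC : ∀ c ∈ C, ∀ t : ℝ, 0 ≤ t → t • c ∈ C) (w : E) (α : ℝ) :
    (∀ y ∈ S + C, α ≤ ⟪w, y⟫) ↔ (∀ c ∈ C, 0 ≤ ⟪w, c⟫) ∧ ∀ s ∈ S, α ≤ ⟪w, s⟫ := by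
  constructor
  · intro h
    obtain ⟨s₀, hs₀⟩ := hS
    refine ⟨fun c hc => nonneg_of_forall_le_add_mul (a := ⟪w, s₀⟫) (α := α) fun t ht => ?_,
      fun s hs => ?_⟩
    · simpa [inner_add_right, real_inner_smul_right] using
        h _ (Set.add_mem_add hs₀ (hC c hc t ht))
    · simpa using h _ (Set.add_mem_add hs hC0)
  · rintro ⟨hC, hS⟩ _ ⟨s, hs, c, hc, rfl⟩
    rw [inner_add_right]
    linarith [hC c hc, hS s hs]

end InnerProductSpace

theorem stmt_7_general (m q : ℕ) (X : Set (Fin m → ℝ))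
    (hXne : X.Nonempty) (hXcpt : IsCompact X)
    (f : (Fin m → ℝ) → EuclideanSpace ℝ (Fin q)) (hf : ContinuousOn f X)
    (C : Set (EuclideanSpace ℝ (Fin q)))
    (hCne : C.Nonempty)
    (hCcone : ∀ c ∈ C, ∀ t : ℝ, 0 ≤ t → t • c ∈ C)
    (P : Set (EuclideanSpace ℝ (Fin q))) (hP : P = f '' X + C)
    (D : Set ((EuclideanSpace ℝ (Fin q)) × ℝ))
    (hD : D = {p | (∀ c ∈ C, 0 ≤ ⟪p.1, c⟫) ∧
      p.2 ≤ sInf ((fun x => ⟪p.1, f x⟫) '' X)}) :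
    D = {p | ∀ y ∈ P, p.2 ≤ ⟪p.1, y⟫} := by
  subst hP hD
  have hC0 : (0 : EuclideanSpace ℝ (Fin q)) ∈ C := by
    obtain ⟨c, hc⟩ := hCne
    simpa using hCcone c hc 0 le_rfl
  ext ⟨w, α⟩
  have hbdd : BddBelow ((fun x => ⟪w, f x⟫) '' X) :=
    (hXcpt.image_of_continuousOn
      ((continuous_const.inner continuous_id).comp_continuousOn hf)).bddBelow
  simp only [Set.mem_ofPred_eq, forall_le_inner_add_iff (hXne.image f) hC0 hCcone,
    le_csInf_iff hbdd (hXne.image _), Set.forall_mem_image]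

/-- With coupling `φ(y, w, α) = ⟪w, y⟫ - α`, the lower image
`𝒟 = {(w, α) | w ∈ C⁺, α ≤ inf_{x ∈ 𝒳} ⟪w, f x⟫}` consists exactly of the pairs `(w, α)`
such that `⟪w, y⟫ ≥ α` for every `y` in the upper image `𝒫 = f(𝒳) + C`. -/
theorem stmt_7 (m q : ℕ) (X : Set (Fin m → ℝ))
    (hXne : X.Nonempty) (hXcpt : IsCompact X) (hXconv : Convex ℝ X)
    (f : (Fin m → ℝ) → EuclideanSpace ℝ (Fin q)) (hf : ContinuousOn f X)
    (C : Set (EuclideanSpace ℝ (Fin q)))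
    (hCne : C.Nonempty) (hCnetriv : C ≠ Set.univ)
    (hCpointed : ∀ x ∈ C, -x ∈ C → x = 0)
    (hCsolid : (interior C).Nonempty)
    (hCcl : IsClosed C) (hCconv : Convex ℝ C)
    (hCcone : ∀ c ∈ C, ∀ t : ℝ, 0 ≤ t → t • c ∈ C)
    (hfC : ∀ x₁ ∈ X, ∀ x₂ ∈ X, ∀ t : ℝ, 0 ≤ t → t ≤ 1 →
      (t • f x₁ + (1 - t) • f x₂) - f (t • x₁ + (1 - t) • x₂) ∈ C)
    (P : Set (EuclideanSpace ℝ (Fin q))) (hP : P = f '' X + C)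
    (D : Set ((EuclideanSpace ℝ (Fin q)) × ℝ))
    (hD : D = {p | (∀ c ∈ C, 0 ≤ ⟪p.1, c⟫) ∧
      p.2 ≤ sInf ((fun x => ⟪p.1, f x⟫) '' X)}) :
    D = {p | ∀ y ∈ P, p.2 ≤ ⟪p.1, y⟫} :=
  stmt_7_general m q X hXne hXcpt f hf C hCne hCcone P hP D hD
end

section
/- With upper image $\mathcal{P} = f(\mathcal{X}) + C$ and lower image $\mathcal{D} = \{(w,\alpha) \mid w \in C^+, \alpha \leq \inf_{x\in\mathcal{X}} w^\top f(x)\}$, it holds that $\mathcal{P} = \{y \in \mathbb{R}^q \mid \forall (w,\alpha) \in \mathcal{D}: w^\top y \geq \alpha\}$, i.e., the upper image is recovered from the lower image via the bilinear coupling $\varphi(y,w,\alpha) = w^\top y - \alpha$. -/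
open RealInnerProductSpace Pointwise

/-!
A closed convex set `P` with `P + C ⊆ P` is the intersection of the halfspaces
`{y | ⟪w, y⟫ ≥ inf_P ⟪w, ·⟫}` with `w ∈ C⁺`: Hahn–Banach separates a point `y ∉ P` from `P` by
some `w`, and `w ∈ C⁺` because otherwise `⟪w, ·⟫` would be unbounded below along the rays
`z + t • c ⊆ P`. The upper image `f(X) + C` is such a set: it is convex since `f` is
`C`-convex, and closed as the sum of a compact and a closed set. On it, `⟪w, ·⟫` has the same
infimum as on `f(X)`, which is the value read off the lower image.
-/

def ConeConvexOn {V E : Type*} [AddCommGroup V] [Module ℝ V] [AddCommGroup E] [Module ℝ E]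
    (C : Set E) (X : Set V) (f : V → E) : Prop :=
  ∀ x₁ ∈ X, ∀ x₂ ∈ X, ∀ t : ℝ, 0 ≤ t → t ≤ 1 →
    (t • f x₁ + (1 - t) • f x₂) - f (t • x₁ + (1 - t) • x₂) ∈ C

section Cone

variable {E : Type*} [AddCommGroup E] [Module ℝ E] {C : Set E}

lemma add_mem_of_convex_of_smul_mem (hCconv : Convex ℝ C)
    (hCcone : ∀ c ∈ C, ∀ t : ℝ, 0 ≤ t → t • c ∈ C) {c₁ c₂ : E} (h₁ : c₁ ∈ C) (h₂ : c₂ ∈ C) :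
    c₁ + c₂ ∈ C := by
  have hmid : (1 / 2 : ℝ) • c₁ + (1 / 2 : ℝ) • c₂ ∈ C :=
    hCconv h₁ h₂ (by norm_num) (by norm_num) (by norm_num)
  simpa [smul_add, smul_smul] using hCcone _ hmid 2 (by norm_num)

lemma convex_image_add_of_coneConvexOn {V : Type*} [AddCommGroup V] [Module ℝ V]
    {X : Set V} {f : V → E} (hXconv : Convex ℝ X) (hCconv : Convex ℝ C)
    (hCcone : ∀ c ∈ C, ∀ t : ℝ, 0 ≤ t → t • c ∈ C) (hfC : ConeConvexOn C X f) :
    Convex ℝ (f '' X + C) := by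
  rintro _ ⟨_, ⟨x₁, hx₁, rfl⟩, c₁, hc₁, rfl⟩ _ ⟨_, ⟨x₂, hx₂, rfl⟩, c₂, hc₂, rfl⟩ a b ha hb hab
  obtain rfl : b = 1 - a := by linarith
  have hgap := hfC x₁ hx₁ x₂ hx₂ a ha (by linarith)
  refine ⟨f (a • x₁ + (1 - a) • x₂), ⟨_, hXconv hx₁ hx₂ ha hb (by ring), rfl⟩,
    _ + (a • c₁ + (1 - a) • c₂),
    add_mem_of_convex_of_smul_mem hCconv hCcone hgap (hCconv hc₁ hc₂ ha hb hab), ?_⟩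
  simp only [smul_add]
  abel

end Cone

lemma nonneg_of_forall_lt_add_mul {a b u : ℝ} (h : ∀ t : ℝ, 0 ≤ t → u < a + t * b) : 0 ≤ b := by
  by_contra! hb
  have hau : u < a := by simpa using h 0 le_rfl
  have hcross := h ((a - u) / -b) (div_nonneg (by linarith) (by linarith))
  have hcancel : (a - u) / -b * b = u - a := by field_simp [hb.ne]; ring
  linarith

section Separation

variable {E : Type*} [NormedAddCommGroup E] [InnerProductSpace ℝ E]

theorem exists_inner_separation_of_add_subset [CompleteSpace E] {P C : Set E}
    (hPne : P.Nonempty) (hPconv : Convex ℝ P) (hPcl : IsClosed P)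
    (hPC : P + C ⊆ P) (hCcone : ∀ c ∈ C, ∀ t : ℝ, 0 ≤ t → t • c ∈ C)
    {y : E} (hy : y ∉ P) :
    ∃ w : E, (∀ c ∈ C, 0 ≤ ⟪w, c⟫) ∧ ∃ u, ⟪w, y⟫ < u ∧ ∀ z ∈ P, u < ⟪w, z⟫ := by
  obtain ⟨g, u, hgy, hgP⟩ := geometric_hahn_banach_point_closed hPconv hPcl hy
  set w := (InnerProductSpace.toDual ℝ E).symm g
  have hwg : ∀ z, ⟪w, z⟫ = g z := fun z => InnerProductSpace.toDual_symm_apply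
  simp only [← hwg] at hgy hgP
  refine ⟨w, fun c hc => ?_, u, hgy, hgP⟩
  obtain ⟨z, hz⟩ := hPne
  refine nonneg_of_forall_lt_add_mul (a := ⟪w, z⟫) (u := u) fun t ht => ?_
  simpa [inner_add_right, inner_smul_right] using
    hgP _ (hPC (Set.add_mem_add hz (hCcone c hc t ht)))

lemma sInf_inner_image_le_of_mem_image_add {V : Type*} [TopologicalSpace V] {X : Set V}
    {f : V → E} {C : Set E} (hXcpt : IsCompact X) (hf : ContinuousOn f X) {w : E}
    (hw : ∀ c ∈ C, 0 ≤ ⟪w, c⟫) {y : E} (hy : y ∈ f '' X + C) :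
    sInf ((fun x => ⟪w, f x⟫) '' X) ≤ ⟪w, y⟫ := by
  obtain ⟨_, ⟨x, hx, rfl⟩, c, hc, rfl⟩ := hy
  have hbdd : BddBelow ((fun x => ⟪w, f x⟫) '' X) :=
    (hXcpt.image_of_continuousOn (continuousOn_const.inner hf)).bddBelow
  calc sInf ((fun x => ⟪w, f x⟫) '' X) ≤ ⟪w, f x⟫ := csInf_le hbdd ⟨x, hx, rfl⟩
    _ ≤ ⟪w, f x + c⟫ := by simpa [inner_add_right] using hw c hc

end Separation

theorem stmt_8_general (m q : ℕ) (X : Set (Fin m → ℝ))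
    (hXne : X.Nonempty) (hXcpt : IsCompact X) (hXconv : Convex ℝ X)
    (f : (Fin m → ℝ) → EuclideanSpace ℝ (Fin q)) (hf : ContinuousOn f X)
    (C : Set (EuclideanSpace ℝ (Fin q)))
    (hCne : C.Nonempty)
    (hCcl : IsClosed C) (hCconv : Convex ℝ C)
    (hCcone : ∀ c ∈ C, ∀ t : ℝ, 0 ≤ t → t • c ∈ C)
    (hfC : ∀ x₁ ∈ X, ∀ x₂ ∈ X, ∀ t : ℝ, 0 ≤ t → t ≤ 1 →
      (t • f x₁ + (1 - t) • f x₂) - f (t • x₁ + (1 - t) • x₂) ∈ C)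
    (P : Set (EuclideanSpace ℝ (Fin q))) (hP : P = f '' X + C)
    (D : Set ((EuclideanSpace ℝ (Fin q)) × ℝ))
    (hD : D = {p | (∀ c ∈ C, 0 ≤ ⟪p.1, c⟫) ∧
      p.2 ≤ sInf ((fun x => ⟪p.1, f x⟫) '' X)}) :
    P = {y | ∀ p ∈ D, p.2 ≤ ⟪p.1, y⟫} := by
  obtain ⟨c₀, hc₀⟩ := hCne
  have h0C : (0 : EuclideanSpace ℝ (Fin q)) ∈ C := by simpa using hCcone c₀ hc₀ 0 le_rfl
  have hCadd : C + C ⊆ C := Set.add_subset_iff.2 fun _ h₁ _ h₂ =>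
    add_mem_of_convex_of_smul_mem hCconv hCcone h₁ h₂
  have hfXP : f '' X ⊆ f '' X + C := Set.subset_add_left _ h0C
  subst hP hD
  ext y
  refine ⟨fun hy p hp => hp.2.trans (sInf_inner_image_le_of_mem_image_add hXcpt hf hp.1 hy),
    fun hy => ?_⟩
  by_contra hyP
  obtain ⟨w, hw, u, hwy, hwP⟩ :=
    exists_inner_separation_of_add_subset ((hXne.image f).add ⟨0, h0C⟩)
      (convex_image_add_of_coneConvexOn hXconv hCconv hCcone hfC)
      (hCcl.add_left_of_isCompact (hXcpt.image_of_continuousOn hf))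
      (by rw [add_assoc]; exact Set.add_subset_add_left hCadd) hCcone hyP
  have hu : u ≤ sInf ((fun x => ⟪w, f x⟫) '' X) :=
    le_csInf (hXne.image _) fun _ ⟨x, hx, hxb⟩ => hxb ▸ (hwP _ (hfXP ⟨x, hx, rfl⟩)).le
  linarith [hy (w, sInf ((fun x => ⟪w, f x⟫) '' X)) ⟨hw, le_rfl⟩]

/-- With coupling `φ(y, w, α) = ⟪w, y⟫ - α`, the upper image `𝒫 = f(𝒳) + C` is recovered from the lower image
`𝒟 = {(w, α) | w ∈ C⁺, α ≤ inf_{x ∈ 𝒳} ⟪w, f x⟫}` as the set of `y` with `⟪w, y⟫ ≥ α`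
for all `(w, α) ∈ 𝒟`. -/
theorem stmt_8 (m q : ℕ) (X : Set (Fin m → ℝ))
    (hXne : X.Nonempty) (hXcpt : IsCompact X) (hXconv : Convex ℝ X)
    (f : (Fin m → ℝ) → EuclideanSpace ℝ (Fin q)) (hf : ContinuousOn f X)
    (C : Set (EuclideanSpace ℝ (Fin q)))
    (hCne : C.Nonempty) (hCnetriv : C ≠ Set.univ)
    (hCpointed : ∀ x ∈ C, -x ∈ C → x = 0)
    (hCsolid : (interior C).Nonempty)
    (hCcl : IsClosed C) (hCconv : Convex ℝ C)
    (hCcone : ∀ c ∈ C, ∀ t : ℝ, 0 ≤ t → t • c ∈ C)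
    (hfC : ∀ x₁ ∈ X, ∀ x₂ ∈ X, ∀ t : ℝ, 0 ≤ t → t ≤ 1 →
      (t • f x₁ + (1 - t) • f x₂) - f (t • x₁ + (1 - t) • x₂) ∈ C)
    (P : Set (EuclideanSpace ℝ (Fin q))) (hP : P = f '' X + C)
    (D : Set ((EuclideanSpace ℝ (Fin q)) × ℝ))
    (hD : D = {p | (∀ c ∈ C, 0 ≤ ⟪p.1, c⟫) ∧
      p.2 ≤ sInf ((fun x => ⟪p.1, f x⟫) '' X)}) :
    P = {y | ∀ p ∈ D, p.2 ≤ ⟪p.1, y⟫} :=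
  stmt_8_general m q X hXne hXcpt hXconv f hf C hCne hCcl hCconv hCcone hfC P hP D hD
end

section
/- Let $\emptyset \neq \bar{\mathcal{D}} \subseteq \mathbb{R}^{q+1}$ be a closed convex cone satisfying $\bar{\mathcal{D}} = \bar{\mathcal{D}} - K$ where $K = \operatorname{cone}\{e^{q+1}\}$, and suppose $\mathcal{P}_{\bar{\mathcal{D}}} = \{y \in \mathbb{R}^q \mid \forall (w,\alpha) \in \bar{\mathcal{D}}: w^\top y \geq \alpha\}$ is nonempty. Then $\mathcal{D}_{\mathcal{P}_{\bar{\mathcal{D}}}} = \bar{\mathcal{D}}$, where $\mathcal{D}_{A} = \{(w,\alpha) \mid \forall y \in A: w^\top y \geq \alpha\}$. -/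
/-!
Separate a point `p ∉ 𝒟̄` from the closed convex cone `𝒟̄` by a functional
`(w, α) ↦ ⟪x, w⟫ + c α` that is nonnegative on `𝒟̄` and negative at `p`. Since `𝒟̄` is a lower
set, `c ≤ 0`. When `c < 0`, rescaling gives the point `(-c)⁻¹ • x ∈ 𝒫_𝒟̄`, whose inequality `p`
violates. The case `c = 0` is reduced to this one by adding `ε (⟪y₀, w⟫ - α)` for some
`y₀ ∈ 𝒫_𝒟̄` and letting `ε → 0⁺`.
-/

open RealInnerProductSpace Filter Topology

namespace ProperCone

variable {F : Type*} [AddCommGroup F] [Module ℝ F] [TopologicalSpace F]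

def ofConvex (D : Set F) (hne : D.Nonempty) (hcl : IsClosed D) (hconv : Convex ℝ D)
    (hcone : ∀ p ∈ D, ∀ t : ℝ, 0 ≤ t → t • p ∈ D) : ProperCone ℝ F where
  carrier := D
  zero_mem' := by
    obtain ⟨p, hp⟩ := hne
    simpa using hcone p hp 0 le_rfl
  add_mem' {p r} hp hr := by
    have hmid := hconv hp hr (by norm_num : (0 : ℝ) ≤ 1 / 2) (by norm_num : (0 : ℝ) ≤ 1 / 2)
      (by norm_num)
    convert hcone _ hmid 2 zero_le_two using 1
    module
  smul_mem' t p hp := hcone p hp t t.2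
  isClosed' := hcl

end ProperCone

variable {E : Type*} [NormedAddCommGroup E] [InnerProductSpace ℝ E]

/-- The paper's `𝒫_D`. -/
def inequalitySolutions (D : Set (E × ℝ)) : Set E := {y | ∀ p ∈ D, p.2 ≤ ⟪p.1, y⟫}

/-- The paper's `𝒟_P`. -/
def validInequalities (P : Set E) : Set (E × ℝ) := {p | ∀ y ∈ P, p.2 ≤ ⟪p.1, y⟫}

theorem subset_validInequalities_inequalitySolutions (D : Set (E × ℝ)) :
    D ⊆ validInequalities (inequalitySolutions D) :=
  fun p hp _ hy => hy p hp

theorem StrongDual.exists_eq_inner_add_mul [CompleteSpace E] (f : StrongDual ℝ (E × ℝ)) :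
    ∃ (x : E) (c : ℝ), ∀ r : E × ℝ, f r = ⟪x, r.1⟫ + c * r.2 := by
  refine ⟨(InnerProductSpace.toDual ℝ E).symm (f.comp (.inl ℝ E ℝ)), f (0, 1), fun r => ?_⟩
  have hr : r = (r.1, 0) + r.2 • ((0 : E), (1 : ℝ)) := by ext <;> simp
  rw [InnerProductSpace.toDual_symm_apply, hr, map_add, map_smul]
  simp [mul_comm]

theorem exists_inner_add_mul_neg_of_notMem [CompleteSpace E] {D : Set (E × ℝ)} {p : E × ℝ}
    (hne : D.Nonempty) (hcl : IsClosed D) (hconv : Convex ℝ D)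
    (hcone : ∀ p ∈ D, ∀ t : ℝ, 0 ≤ t → t • p ∈ D) (hp : p ∉ D) :
    ∃ (x : E) (c : ℝ), (∀ r ∈ D, 0 ≤ ⟪x, r.1⟫ + c * r.2) ∧ ⟪x, p.1⟫ + c * p.2 < 0 := by
  obtain ⟨f, hfD, hfp⟩ :=
    (ProperCone.ofConvex D hne hcl hconv hcone).hyperplane_separation_point hp
  obtain ⟨x, c, hf⟩ := f.exists_eq_inner_add_mul
  exact ⟨x, c, fun r hr => hf r ▸ hfD r hr, hf p ▸ hfp⟩

theorem nonpos_of_forall_inner_add_mul_nonneg {D : Set (E × ℝ)} {x : E} {c : ℝ}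
    (hne : D.Nonempty) (hlower : ∀ p ∈ D, ∀ t : ℝ, 0 ≤ t → ((p.1, p.2 - t) : _ × ℝ) ∈ D)
    (hD : ∀ r ∈ D, 0 ≤ ⟪x, r.1⟫ + c * r.2) : c ≤ 0 := by
  by_contra! hc
  obtain ⟨p, hp⟩ := hne
  set t := (⟪x, p.1⟫ + c * p.2 + 1) / c
  have ht : 0 ≤ t := div_nonneg (by linarith [hD p hp]) hc.le
  have hshift := hD _ (hlower p hp t ht)
  have hct : c * t = ⟪x, p.1⟫ + c * p.2 + 1 := mul_div_cancel₀ _ hc.ne'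
  simp only at hshift
  linarith

theorem le_inner_inv_neg_smul_iff {x w : E} {c α : ℝ} (hc : c < 0) :
    α ≤ ⟪w, (-c)⁻¹ • x⟫ ↔ 0 ≤ ⟪x, w⟫ + c * α := by
  rw [real_inner_smul_right, real_inner_comm, le_inv_mul_iff₀ (neg_pos.2 hc)]
  constructor <;> intro h <;> linarith

theorem inv_neg_smul_mem_inequalitySolutions {D : Set (E × ℝ)} {x : E} {c : ℝ} (hc : c < 0)
    (hD : ∀ r ∈ D, 0 ≤ ⟪x, r.1⟫ + c * r.2) : (-c)⁻¹ • x ∈ inequalitySolutions D :=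
  fun r hr => (le_inner_inv_neg_smul_iff hc).2 (hD r hr)

theorem inner_add_mul_nonneg_of_mem_validInequalities {D : Set (E × ℝ)} {x : E} {c : ℝ}
    {p : E × ℝ} (hP : (inequalitySolutions D).Nonempty) (hc : c ≤ 0)
    (hD : ∀ r ∈ D, 0 ≤ ⟪x, r.1⟫ + c * r.2) (hp : p ∈ validInequalities (inequalitySolutions D)) :
    0 ≤ ⟪x, p.1⟫ + c * p.2 := by
  obtain ⟨y₀, hy₀⟩ := hP
  have hperturb : ∀ ε > 0, 0 ≤ ⟪x, p.1⟫ + c * p.2 + ε * (⟪y₀, p.1⟫ - p.2) := by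
    intro ε hε
    have hcε : c - ε < 0 := by linarith
    have hDε : ∀ r ∈ D, 0 ≤ ⟪x + ε • y₀, r.1⟫ + (c - ε) * r.2 := by
      intro r hr
      have hy₀r : r.2 ≤ ⟪y₀, r.1⟫ := real_inner_comm y₀ r.1 ▸ hy₀ r hr
      rw [inner_add_left, real_inner_smul_left]
      linarith [hD r hr, mul_nonneg hε.le (sub_nonneg.2 hy₀r)]
    have hpε := (le_inner_inv_neg_smul_iff hcε).1
      (hp _ (inv_neg_smul_mem_inequalitySolutions hcε hDε))
    rw [inner_add_left, real_inner_smul_left] at hpε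
    linarith
  have hlim : Tendsto (fun ε => ⟪x, p.1⟫ + c * p.2 + ε * (⟪y₀, p.1⟫ - p.2)) (𝓝[>] 0)
      (𝓝 (⟪x, p.1⟫ + c * p.2)) :=
    tendsto_nhdsWithin_of_tendsto_nhds <| (by fun_prop : Continuous fun ε : ℝ =>
      ⟪x, p.1⟫ + c * p.2 + ε * (⟪y₀, p.1⟫ - p.2)).tendsto' 0 _ (by simp)
  exact ge_of_tendsto hlim (eventually_nhdsWithin_of_forall hperturb)

/-- Let `𝒟̄ ⊆ ℝ^{q+1}` be a nonempty closed convex cone which is a lower set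
(`𝒟̄ = 𝒟̄ - K` with `K = cone{e^{q+1}}`), such that
`𝒫_𝒟̄ = {y | ∀ (w, α) ∈ 𝒟̄, ⟪w, y⟫ ≥ α}` is nonempty.  Then `𝒟_(𝒫_𝒟̄) = 𝒟̄`. -/
theorem stmt_10 (q : ℕ) (Dbar : Set ((EuclideanSpace ℝ (Fin q)) × ℝ))
    (hne : Dbar.Nonempty) (hcl : IsClosed Dbar) (hconv : Convex ℝ Dbar)
    (hcone : ∀ p ∈ Dbar, ∀ t : ℝ, 0 ≤ t → t • p ∈ Dbar)
    (hlower : ∀ p ∈ Dbar, ∀ t : ℝ, 0 ≤ t → ((p.1, p.2 - t) : _ × ℝ) ∈ Dbar)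
    (PD : Set (EuclideanSpace ℝ (Fin q)))
    (hPD : PD = {y | ∀ p ∈ Dbar, p.2 ≤ ⟪p.1, y⟫})
    (hPDne : PD.Nonempty) :
    {p : (EuclideanSpace ℝ (Fin q)) × ℝ | ∀ y ∈ PD, p.2 ≤ ⟪p.1, y⟫} = Dbar := by
  subst hPD
  refine Set.Subset.antisymm (fun p hp => ?_) (subset_validInequalities_inequalitySolutions Dbar)
  by_contra hpD
  obtain ⟨x, c, hD, hsep⟩ := exists_inner_add_mul_neg_of_notMem hne hcl hconv hcone hpD
  have hc := nonpos_of_forall_inner_add_mul_nonneg hne hlower hD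
  exact hsep.not_ge (inner_add_mul_nonneg_of_mem_validInequalities hPDne hc hD hp)
end

section
/- In the geometric duality setting, let $(w,\alpha) \in \mathbb{R}^{q+1} \setminus \{0\}$ be a $K$-maximal element of the lower image $\mathcal{D}$. Then $H(w,\alpha) \cap \mathcal{P}$, where $H(w,\alpha) = \{y \in \mathbb{R}^q \mid w^\top y = \alpha\}$, is a nonempty weakly $C$-minimal exposed face of the upper image $\mathcal{P}$, and $\mathcal{P} \subseteq \{y \mid w^\top y \geq \alpha\}$. -/
/-!
`K`-maximality of `(w, α)` forces `α = min_{x ∈ 𝒳} ⟪w, f x⟫`, the minimum being attained by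
compactness; since `w ∈ C⁺`, the hyperplane `H(w, α)` therefore supports `𝒫` and meets it at
`f x₀`. If `y ∈ H(w, α) ∩ 𝒫` and `y - c ∈ 𝒫` with `c ∈ int C`, then `⟪w, c⟫ ≤ 0`, so `⟪w, ·⟫`
vanishes at an interior point of `C` while being nonnegative on `C`; this forces `w = 0`, hence
`α = 0`, contradicting `(w, α) ≠ 0`.
-/

open RealInnerProductSpace Pointwise

section InnerProductSpace

variable {E : Type*} [NormedAddCommGroup E] [InnerProductSpace ℝ E] {C : Set E} {w c : E}

-- Otherwise `⟪w, c - t • w⟫ < 0` for small `t > 0`, while `c - t • w ∈ C`.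
theorem eq_zero_of_inner_eq_zero_of_mem_interior (hw : ∀ c ∈ C, 0 ≤ ⟪w, c⟫)
    (hc : c ∈ interior C) (hwc : ⟪w, c⟫ = 0) : w = 0 := by
  have hlim : Filter.Tendsto (fun t : ℝ => c - t • w) (nhdsWithin 0 (Set.Ioi 0)) (nhds c) := by
    have : Filter.Tendsto (fun t : ℝ => c - t • w) (nhds 0) (nhds (c - (0 : ℝ) • w)) :=
      (continuous_const.sub (continuous_id.smul continuous_const)).tendsto 0
    simpa using this.mono_left nhdsWithin_le_nhds
  obtain ⟨t, hmem, ht⟩ :=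
    ((hlim.eventually (mem_interior_iff_mem_nhds.mp hc)).and self_mem_nhdsWithin).exists
  have hnonneg := hw _ hmem
  rw [inner_sub_right, inner_smul_right, hwc, real_inner_self_eq_norm_sq] at hnonneg
  have : ‖w‖ ^ 2 ≤ 0 := by nlinarith
  simpa using this

theorem sub_notMem_of_inner_eq_of_forall_le {P : Set E} {α : ℝ} {y : E}
    (hw : ∀ c ∈ C, 0 ≤ ⟪w, c⟫) (hw0 : w ≠ 0) (hP : ∀ y ∈ P, α ≤ ⟪w, y⟫)
    (hy : ⟪w, y⟫ = α) (hc : c ∈ interior C) : y - c ∉ P := by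
  intro hyc
  have hle : α ≤ α - ⟪w, c⟫ := by simpa [inner_sub_right, hy] using hP _ hyc
  exact hw0 (eq_zero_of_inner_eq_zero_of_mem_interior hw hc
    (le_antisymm (by linarith) (hw c (interior_subset hc))))

theorem le_inner_of_mem_image_add {ι : Type*} {X : Set ι} {f : ι → E} {α : ℝ}
    (hw : ∀ c ∈ C, 0 ≤ ⟪w, c⟫) (hf : ∀ x ∈ X, α ≤ ⟪w, f x⟫) :
    ∀ y ∈ f '' X + C, α ≤ ⟪w, y⟫ := by
  rintro _ ⟨_, ⟨x, hx, rfl⟩, c, hc, rfl⟩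
  rw [inner_add_right]
  linarith [hf x hx, hw c hc]

end InnerProductSpace

theorem stmt_16_general (m q : ℕ) (X : Set (Fin m → ℝ))
    (hXne : X.Nonempty) (hXcpt : IsCompact X)
    (f : (Fin m → ℝ) → EuclideanSpace ℝ (Fin q)) (hf : ContinuousOn f X)
    (C : Set (EuclideanSpace ℝ (Fin q)))
    (hCne : C.Nonempty)
    (hCcone : ∀ c ∈ C, ∀ t : ℝ, 0 ≤ t → t • c ∈ C)
    (P : Set (EuclideanSpace ℝ (Fin q))) (hP : P = f '' X + C)
    (D : Set ((EuclideanSpace ℝ (Fin q)) × ℝ))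
    (hD : D = {p | (∀ c ∈ C, 0 ≤ ⟪p.1, c⟫) ∧
      p.2 ≤ sInf ((fun x => ⟪p.1, f x⟫) '' X)})
    (w : EuclideanSpace ℝ (Fin q)) (α : ℝ)
    (hwα : (w, α) ∈ D) (hne0 : ((w, α) : _ × ℝ) ≠ 0)
    (hKmax : ∀ t : ℝ, 0 < t → ((w, α + t) : _ × ℝ) ∉ D) :
    (∀ y ∈ P, α ≤ ⟪w, y⟫) ∧
    ({y ∈ P | ⟪w, y⟫ = α}).Nonempty ∧
    (∀ y ∈ P, ⟪w, y⟫ = α → ∀ c ∈ interior C, y - c ∉ P) := by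
  subst hP hD
  obtain ⟨hw, hα⟩ := hwα
  obtain ⟨x₀, hx₀, hmin⟩ :=
    hXcpt.exists_isMinOn hXne (continuousOn_const.inner hf : ContinuousOn (fun x => ⟪w, f x⟫) X)
  have hsInf : sInf ((fun x => ⟪w, f x⟫) '' X) = ⟪w, f x₀⟫ :=
    IsLeast.csInf_eq ⟨⟨x₀, hx₀, rfl⟩, by rintro _ ⟨x, hx, rfl⟩; exact hmin hx⟩
  have hαeq : α = ⟪w, f x₀⟫ := by
    refine le_antisymm (hsInf ▸ hα) (not_lt.mp fun hlt => ?_)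
    exact hKmax (⟪w, f x₀⟫ - α) (sub_pos.mpr hlt) ⟨hw, by simp [hsInf]⟩
  have hsupp : ∀ y ∈ f '' X + C, α ≤ ⟪w, y⟫ :=
    le_inner_of_mem_image_add hw fun x hx => hαeq ▸ hmin hx
  have hw0 : w ≠ 0 := by
    rintro rfl
    exact hne0 (by simp [hαeq])
  have h0C : (0 : EuclideanSpace ℝ (Fin q)) ∈ C := by
    obtain ⟨c, hc⟩ := hCne
    simpa using hCcone c hc 0 le_rfl
  refine ⟨hsupp, ⟨f x₀ + 0, Set.add_mem_add ⟨x₀, hx₀, rfl⟩ h0C, by simp [hαeq]⟩, ?_⟩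
  exact fun y _ hy c hc => sub_notMem_of_inner_eq_of_forall_le hw hw0 hsupp hy hc

/-- If `(w, α) ≠ 0` is a `K`-maximal element of the lower image `𝒟`, then
`H(w, α) ∩ 𝒫 = {y ∈ 𝒫 | ⟪w, y⟫ = α}` is a nonempty weakly `C`-minimal exposed face of the
upper image `𝒫 = f(𝒳) + C`, and `𝒫 ⊆ {y | ⟪w, y⟫ ≥ α}`. -/
theorem stmt_16 (m q : ℕ) (X : Set (Fin m → ℝ))
    (hXne : X.Nonempty) (hXcpt : IsCompact X) (hXconv : Convex ℝ X)
    (f : (Fin m → ℝ) → EuclideanSpace ℝ (Fin q)) (hf : ContinuousOn f X)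
    (C : Set (EuclideanSpace ℝ (Fin q)))
    (hCne : C.Nonempty) (hCnetriv : C ≠ Set.univ)
    (hCpointed : ∀ x ∈ C, -x ∈ C → x = 0)
    (hCsolid : (interior C).Nonempty)
    (hCcl : IsClosed C) (hCconv : Convex ℝ C)
    (hCcone : ∀ c ∈ C, ∀ t : ℝ, 0 ≤ t → t • c ∈ C)
    (hfC : ∀ x₁ ∈ X, ∀ x₂ ∈ X, ∀ t : ℝ, 0 ≤ t → t ≤ 1 →
      (t • f x₁ + (1 - t) • f x₂) - f (t • x₁ + (1 - t) • x₂) ∈ C)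
    (P : Set (EuclideanSpace ℝ (Fin q))) (hP : P = f '' X + C)
    (D : Set ((EuclideanSpace ℝ (Fin q)) × ℝ))
    (hD : D = {p | (∀ c ∈ C, 0 ≤ ⟪p.1, c⟫) ∧
      p.2 ≤ sInf ((fun x => ⟪p.1, f x⟫) '' X)})
    (w : EuclideanSpace ℝ (Fin q)) (α : ℝ)
    (hwα : (w, α) ∈ D) (hne0 : ((w, α) : _ × ℝ) ≠ 0)
    (hKmax : ∀ t : ℝ, 0 < t → ((w, α + t) : _ × ℝ) ∉ D) :
    (∀ y ∈ P, α ≤ ⟪w, y⟫) ∧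
    ({y ∈ P | ⟪w, y⟫ = α}).Nonempty ∧
    (∀ y ∈ P, ⟪w, y⟫ = α → ∀ c ∈ interior C, y - c ∉ P) :=
  stmt_16_general m q X hXne hXcpt f hf C hCne hCcone P hP D hD w α hwα hne0 hKmax
end

section
/- For $\epsilon > 0$, let $\bar{\mathcal{X}} \subseteq \mathcal{X}$ be a nonempty finite set with $\operatorname{conv} f(\bar{\mathcal{X}}) + C + B(0,\epsilon) \supseteq \mathcal{P}$ (a finite weak $\epsilon$-infimizer), and let $\mathcal{P}_\epsilon = \operatorname{conv} f(\bar{\mathcal{X}}) + C + B(0,\epsilon)$ and $\mathcal{D}_\epsilon = \{(w,\alpha) \mid \forall y \in \mathcal{P}_\epsilon: w^\top y \geq \alpha\}$. Then $\operatorname{cone}((\mathcal{D}_\epsilon \cap (\mathbb{S}^{q-1} \times \mathbb{R})) + \epsilon\{e^{q+1}\}) - K \supseteq \mathcal{D} \supseteq \mathcal{D}_\epsilon$, where $\mathcal{D}$ is the lower image and $\mathbb{S}^{q-1} = \{w \mid \|w\|_* = 1\}$. -/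
open RealInnerProductSpace Pointwise

/-!
Write a point of `𝒫_ε` as `v + c + z` with `v ∈ conv f(𝒳̄)`, `c ∈ C` and `N z ≤ ε`. For `(w, α) ∈ 𝒟`
we have `⟪w, v⟫ ≥ α` (as `𝒳̄ ⊆ 𝒳`), `⟪w, c⟫ ≥ 0` and `⟪w, z⟫ ≥ -ε ‖w‖_*`; so if `w ≠ 0`, then
`(w / ‖w‖_*, α / ‖w‖_* - ε) ∈ 𝒟_ε` and `(w, α)` is its `‖w‖_*`-multiple once `ε` is added to
the last coordinate. If `w = 0`, then `α ≤ 0` and `(0, α) = 0 • u - (0, -α)` for any `u ∈ 𝒟_ε`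
built in the same way from a nonzero element of `C⁺`, which exists by Farkas' lemma as `C ≠ ℝ^q`.
The inclusion `𝒟_ε ⊆ 𝒟` is immediate from `𝒫 ⊆ 𝒫_ε`.
-/

structure IsNormFunction {E : Type*} [AddCommGroup E] [Module ℝ E] (N : E → ℝ) : Prop where
  add_le : ∀ x y, N (x + y) ≤ N x + N y
  smul : ∀ (c : ℝ) x, N (c • x) = |c| * N x
  eq_zero : ∀ x, N x = 0 → x = 0

namespace IsNormFunction

variable {E : Type*} [NormedAddCommGroup E] [NormedSpace ℝ E] {N : E → ℝ}

def toSeminorm (hN : IsNormFunction N) : Seminorm ℝ E :=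
  Seminorm.of N hN.add_le (by simpa only [Real.norm_eq_abs] using hN.smul)

lemma nonneg (hN : IsNormFunction N) (x : E) : 0 ≤ N x := apply_nonneg hN.toSeminorm x

lemma map_zero (hN : IsNormFunction N) : N 0 = 0 := _root_.map_zero hN.toSeminorm

lemma map_neg (hN : IsNormFunction N) (x : E) : N (-x) = N x := map_neg_eq_map hN.toSeminorm x

variable [FiniteDimensional ℝ E]

lemma continuous (hN : IsNormFunction N) : Continuous N :=
  hN.toSeminorm.convexOn.locallyLipschitz.continuous

lemma exists_pos_mul_norm_le (hN : IsNormFunction N) : ∃ c > 0, ∀ z, c * ‖z‖ ≤ N z := by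
  obtain ⟨c, hc, hcN⟩ := (isCompact_sphere (0 : E) 1).exists_forall_le' hN.continuous.continuousOn
    (a := 0) fun z hz =>
      (hN.nonneg z).lt_of_ne' fun h => Metric.ne_of_mem_sphere hz one_ne_zero (hN.eq_zero z h)
  refine ⟨c, hc, fun z => ?_⟩
  rcases eq_or_ne z 0 with rfl | hz
  · simp [hN.map_zero]
  · have hz' : 0 < ‖z‖ := norm_pos_iff.2 hz
    have := hcN (‖z‖⁻¹ • z) (by simp [norm_smul, hz])
    rwa [hN.smul, abs_of_pos (inv_pos.2 hz'), le_inv_mul_iff₀' hz'] at this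

end IsNormFunction

section DualNorm

variable {E : Type*} [NormedAddCommGroup E] [InnerProductSpace ℝ E] {N : E → ℝ}

/-- A junk value unless `{x | N x ≤ 1}` is bounded, see `IsNormFunction.bddAbove_inner_image`. -/
noncomputable def dualNorm (N : E → ℝ) (w : E) : ℝ := sSup ((fun x => ⟪w, x⟫) '' {x | N x ≤ 1})

lemma dualNorm_smul (w : E) {a : ℝ} (ha : 0 ≤ a) : dualNorm N (a • w) = a * dualNorm N w := by
  have : (fun x => ⟪a • w, x⟫) '' {x | N x ≤ 1} = a • (fun x => ⟪w, x⟫) '' {x | N x ≤ 1} := by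
    rw [← Set.image_smul, Set.image_image]
    simp only [real_inner_smul_left, smul_eq_mul]
  rw [dualNorm, dualNorm, this, Real.sSup_smul_of_nonneg ha, smul_eq_mul]

variable [FiniteDimensional ℝ E]

lemma IsNormFunction.bddAbove_inner_image (hN : IsNormFunction N) (w : E) :
    BddAbove ((fun x => ⟪w, x⟫) '' {x | N x ≤ 1}) := by
  obtain ⟨c, hc, hcN⟩ := hN.exists_pos_mul_norm_le
  refine ⟨‖w‖ * c⁻¹, ?_⟩
  rintro _ ⟨x, hx, rfl⟩
  have hx' : ‖x‖ ≤ c⁻¹ := by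
    rw [← one_div, le_div_iff₀' hc]
    exact (hcN x).trans hx
  exact (real_inner_le_norm w x).trans (mul_le_mul_of_nonneg_left hx' (norm_nonneg w))

lemma IsNormFunction.inner_le_of_le_one (hN : IsNormFunction N) (w : E) {x : E} (hx : N x ≤ 1) :
    ⟪w, x⟫ ≤ dualNorm N w :=
  le_csSup (hN.bddAbove_inner_image w) ⟨x, hx, rfl⟩

lemma IsNormFunction.dualNorm_nonneg (hN : IsNormFunction N) (w : E) : 0 ≤ dualNorm N w := by
  simpa using hN.inner_le_of_le_one w (x := 0) (by simp [hN.map_zero])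

lemma IsNormFunction.inner_le_dualNorm_mul (hN : IsNormFunction N) (w z : E) :
    ⟪w, z⟫ ≤ dualNorm N w * N z := by
  rcases eq_or_ne z 0 with rfl | hz
  · simp [hN.map_zero]
  have hNz : 0 < N z := (hN.nonneg z).lt_of_ne' fun h => hz (hN.eq_zero z h)
  have := hN.inner_le_of_le_one w (x := (N z)⁻¹ • z)
    (by rw [hN.smul, abs_of_pos (inv_pos.2 hNz), inv_mul_cancel₀ hNz.ne'])
  rwa [real_inner_smul_right, inv_mul_le_iff₀ hNz, mul_comm] at this

lemma IsNormFunction.dualNorm_pos (hN : IsNormFunction N) {w : E} (hw : w ≠ 0) :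
    0 < dualNorm N w := by
  have h := hN.inner_le_dualNorm_mul w w
  rw [real_inner_self_eq_norm_sq] at h
  exact pos_of_mul_pos_left ((pow_pos (norm_pos_iff.2 hw) 2).trans_le h) (hN.nonneg w)

lemma IsNormFunction.dualNorm_inv_dualNorm_smul (hN : IsNormFunction N) {w : E} (hw : w ≠ 0) :
    dualNorm N ((dualNorm N w)⁻¹ • w) = 1 := by
  rw [dualNorm_smul w (inv_nonneg.2 (hN.dualNorm_nonneg w)),
    inv_mul_cancel₀ (hN.dualNorm_pos hw).ne']

end DualNorm

section Cones

variable {E : Type*} [NormedAddCommGroup E] [InnerProductSpace ℝ E] {C : Set E}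

lemma zero_mem_of_forall_smul_mem (hCne : C.Nonempty)
    (hCcone : ∀ c ∈ C, ∀ t : ℝ, 0 ≤ t → t • c ∈ C) :
    (0 : E) ∈ C := by
  simpa using hCcone _ hCne.some_mem 0 le_rfl

lemma exists_ne_zero_forall_inner_nonneg [CompleteSpace E] (hCne : C.Nonempty)
    (hCnetriv : C ≠ Set.univ) (hCcl : IsClosed C) (hCconv : Convex ℝ C)
    (hCcone : ∀ c ∈ C, ∀ t : ℝ, 0 ≤ t → t • c ∈ C) : ∃ w ≠ 0, ∀ c ∈ C, 0 ≤ ⟪w, c⟫ := by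
  let K : ProperCone ℝ E :=
    { carrier := C
      add_mem' := fun {x y} hx hy => by
        convert hCcone _ (hCconv hx hy (by norm_num) (by norm_num) (add_halves 1)) 2 zero_le_two
          using 1
        module
      zero_mem' := zero_mem_of_forall_smul_mem hCne hCcone
      smul_mem' := fun t c hc => hCcone c hc t t.2
      isClosed' := hCcl }
  obtain ⟨a, ha⟩ := (Set.ne_univ_iff_exists_notMem C).1 hCnetriv
  obtain ⟨w, hwC, hwa⟩ := K.hyperplane_separation' (x₀ := a) ha
  refine ⟨w, ?_, fun c hc => real_inner_comm w c ▸ hwC c hc⟩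
  rintro rfl
  simp at hwa

lemma inner_nonneg_of_forall_le_inner_add_smul {w y c : E} {α : ℝ}
    (h : ∀ t : ℝ, 0 ≤ t → α ≤ ⟪w, y + t • c⟫) : 0 ≤ ⟪w, c⟫ := by
  by_contra! hc
  have := h ((|⟪w, y⟫ - α| + 1) / -⟪w, c⟫) (div_nonneg (by positivity) (neg_nonneg.2 hc.le))
  rw [inner_add_right, real_inner_smul_right, div_mul_eq_mul_div, div_neg,
    mul_div_cancel_right₀ _ hc.ne] at this
  linarith [le_abs_self (⟪w, y⟫ - α)]

lemma forall_inner_nonneg_and_le_sInf {ι : Type*} {X : Set ι} (hX : X.Nonempty) {f : ι → E}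
    (hC0 : 0 ∈ C) (hCcone : ∀ c ∈ C, ∀ t : ℝ, 0 ≤ t → t • c ∈ C) {w : E} {α : ℝ}
    (h : ∀ y ∈ f '' X + C, α ≤ ⟪w, y⟫) :
    (∀ c ∈ C, 0 ≤ ⟪w, c⟫) ∧ α ≤ sInf ((fun x => ⟪w, f x⟫) '' X) := by
  have hmem {x c} (hx : x ∈ X) (hc : c ∈ C) : f x + c ∈ f '' X + C :=
    Set.add_mem_add (Set.mem_image_of_mem f hx) hc
  obtain ⟨x₀, hx₀⟩ := hX
  refine ⟨fun c hc => inner_nonneg_of_forall_le_inner_add_smul fun t ht =>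
    h _ (hmem hx₀ (hCcone c hc t ht)), le_csInf ⟨_, x₀, hx₀, rfl⟩ ?_⟩
  rintro _ ⟨x, hx, rfl⟩
  simpa using h _ (hmem hx hC0)

end Cones

section InnerLowerBound

variable {E : Type*} [NormedAddCommGroup E] [InnerProductSpace ℝ E] [FiniteDimensional ℝ E]
  {N : E → ℝ} {S C : Set E} {w : E} {α ε : ℝ}

lemma IsNormFunction.sub_mul_dualNorm_le_inner (hN : IsNormFunction N) (hC : ∀ c ∈ C, 0 ≤ ⟪w, c⟫)
    (hS : ∀ v ∈ S, α ≤ ⟪w, v⟫) :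
    ∀ y ∈ convexHull ℝ S + C + {z | N z ≤ ε}, α - ε * dualNorm N w ≤ ⟪w, y⟫ := by
  rintro _ ⟨_, ⟨v, hv, c, hc, rfl⟩, z, hz, rfl⟩
  have hv' : α ≤ ⟪w, v⟫ := convexHull_min hS (convex_halfSpace_ge (innerₗ E w).isLinear α) hv
  have hz' : -(dualNorm N w * ε) ≤ ⟪w, z⟫ := by
    have := hN.inner_le_dualNorm_mul w (-z)
    rw [inner_neg_right, hN.map_neg] at this
    linarith [mul_le_mul_of_nonneg_left (hz : N z ≤ ε) (hN.dualNorm_nonneg w)]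
  rw [inner_add_right, inner_add_right]
  linarith [hC c hc]

lemma IsNormFunction.inv_dualNorm_mul_sub_le_inner (hN : IsNormFunction N) (hw : w ≠ 0)
    (hC : ∀ c ∈ C, 0 ≤ ⟪w, c⟫) (hS : ∀ v ∈ S, α ≤ ⟪w, v⟫) :
    ∀ y ∈ convexHull ℝ S + C + {z | N z ≤ ε},
      (dualNorm N w)⁻¹ * α - ε ≤ ⟪(dualNorm N w)⁻¹ • w, y⟫ := by
  intro y hy
  have hpos := hN.dualNorm_pos hw
  have := hN.sub_mul_dualNorm_le_inner hC hS y hy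
  rw [real_inner_smul_left, ← mul_le_mul_iff_right₀ hpos]
  field_simp
  linarith

end InnerLowerBound

theorem stmt_18_general (m q : ℕ) (X : Set (Fin m → ℝ))
    (hXne : X.Nonempty)
    (f : (Fin m → ℝ) → EuclideanSpace ℝ (Fin q))
    (C : Set (EuclideanSpace ℝ (Fin q)))
    (hCne : C.Nonempty) (hCnetriv : C ≠ Set.univ)
    (hCcl : IsClosed C) (hCconv : Convex ℝ C)
    (hCcone : ∀ c ∈ C, ∀ t : ℝ, 0 ≤ t → t • c ∈ C)
    (P : Set (EuclideanSpace ℝ (Fin q))) (hP : P = f '' X + C)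
    (D : Set ((EuclideanSpace ℝ (Fin q)) × ℝ))
    (hD : D = {p | (∀ c ∈ C, 0 ≤ ⟪p.1, c⟫) ∧
      p.2 ≤ sInf ((fun x => ⟪p.1, f x⟫) '' X)})
    (N : EuclideanSpace ℝ (Fin q) → ℝ)
    (hNtri : ∀ x y, N (x + y) ≤ N x + N y)
    (hNsmul : ∀ (c : ℝ) x, N (c • x) = |c| * N x)
    (hNdef : ∀ x, N x = 0 → x = 0)
    (Nd : EuclideanSpace ℝ (Fin q) → ℝ)
    (hNd : ∀ w, Nd w = sSup ((fun x => ⟪w, x⟫) '' {x | N x ≤ 1}))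
    (ε : ℝ)
    (Xbar : Set (Fin m → ℝ)) (hXbar : Xbar ⊆ X)
    (hXbarfin : Xbar.Finite)
    (Pε : Set (EuclideanSpace ℝ (Fin q)))
    (hPε : Pε = convexHull ℝ (f '' Xbar) + C + {z | N z ≤ ε})
    (hinf : P ⊆ Pε)
    (Dε : Set ((EuclideanSpace ℝ (Fin q)) × ℝ))
    (hDε : Dε = {p | ∀ y ∈ Pε, p.2 ≤ ⟪p.1, y⟫}) :
    D ⊆ {p : (EuclideanSpace ℝ (Fin q)) × ℝ |
        ∃ s : ℝ, 0 ≤ s ∧ ∃ u ∈ Dε, Nd u.1 = 1 ∧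
          ∃ t : ℝ, 0 ≤ t ∧ p = s • ((u.1, u.2 + ε) : (EuclideanSpace ℝ (Fin q)) × ℝ)
            - ((0, t) : (EuclideanSpace ℝ (Fin q)) × ℝ)} ∧
      Dε ⊆ D := by
  have hN : IsNormFunction N := ⟨hNtri, hNsmul, hNdef⟩
  obtain rfl : Nd = dualNorm N := funext hNd
  subst hP hD hPε hDε
  have hC0 := zero_mem_of_forall_smul_mem hCne hCcone
  refine ⟨fun p ⟨hpC, hpinf⟩ => ?_, fun p hp =>
    forall_inner_nonneg_and_le_sInf hXne hC0 hCcone fun y hy => hp y (hinf hy)⟩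
  have hfin {w} := ((hXbarfin.image f).image fun v => ⟪w, v⟫).bddBelow
  rcases eq_or_ne p.1 0 with hp0 | hp0
  · obtain ⟨w, hw0, hwC⟩ := exists_ne_zero_forall_inner_nonneg hCne hCnetriv hCcl hCconv hCcone
    obtain ⟨α, hα⟩ := hfin (w := w)
    have hp2 : p.2 ≤ 0 := hpinf.trans (Real.sInf_nonpos (by rintro _ ⟨x, -, rfl⟩; simp [hp0]))
    exact ⟨0, le_rfl, ((dualNorm N w)⁻¹ • w, (dualNorm N w)⁻¹ * α - ε),
      hN.inv_dualNorm_mul_sub_le_inner hw0 hwC fun v hv => hα ⟨v, hv, rfl⟩,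
      hN.dualNorm_inv_dualNorm_smul hw0, -p.2, by linarith, by ext <;> simp [hp0]⟩
  · obtain ⟨α, hα⟩ := hfin (w := p.1)
    -- `𝒫 ⊆ 𝒫_ε` bounds `⟪p.1, f ·⟫` below on `X`, so the `sInf` in `D` is a genuine infimum.
    have hpX : ∀ v ∈ f '' Xbar, p.2 ≤ ⟪p.1, v⟫ := by
      rintro _ ⟨x, hx, rfl⟩
      refine hpinf.trans (csInf_le ⟨α - ε * dualNorm N p.1, ?_⟩ ⟨x, hXbar hx, rfl⟩)
      rintro _ ⟨x', hx', rfl⟩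
      simpa using hN.sub_mul_dualNorm_le_inner hpC (fun v hv => hα ⟨v, hv, rfl⟩) _
        (hinf (Set.add_mem_add (Set.mem_image_of_mem f hx') hC0))
    refine ⟨_, (hN.dualNorm_pos hp0).le, ((dualNorm N p.1)⁻¹ • p.1, (dualNorm N p.1)⁻¹ * p.2 - ε),
      hN.inv_dualNorm_mul_sub_le_inner hp0 hpC hpX,
      hN.dualNorm_inv_dualNorm_smul hp0, 0, le_rfl, ?_⟩
    have := (hN.dualNorm_pos hp0).ne'
    ext <;> simp [smul_smul, this]

/-- If `𝒳̄` is a finite weak `ε`-infimizer of the primal problem, `𝒫_ε = conv f(𝒳̄) + C + B(0, ε)`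
and `𝒟_ε = {(w, α) | ∀ y ∈ 𝒫_ε, ⟪w, y⟫ ≥ α}`, then
`cone ((𝒟_ε ∩ (𝕊^{q-1} × ℝ)) + ε{e^{q+1}}) - K ⊇ 𝒟 ⊇ 𝒟_ε`, where `𝒟` is the lower image,
`𝕊^{q-1}` the dual-norm unit sphere, `B(0, ε)` the closed `ε`-ball of the norm `N`, and
`K = cone{e^{q+1}}`. -/
theorem stmt_18 (m q : ℕ) (X : Set (Fin m → ℝ))
    (hXne : X.Nonempty) (hXcpt : IsCompact X) (hXconv : Convex ℝ X)
    (f : (Fin m → ℝ) → EuclideanSpace ℝ (Fin q)) (hf : ContinuousOn f X)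
    (C : Set (EuclideanSpace ℝ (Fin q)))
    (hCne : C.Nonempty) (hCnetriv : C ≠ Set.univ)
    (hCpointed : ∀ x ∈ C, -x ∈ C → x = 0)
    (hCsolid : (interior C).Nonempty)
    (hCcl : IsClosed C) (hCconv : Convex ℝ C)
    (hCcone : ∀ c ∈ C, ∀ t : ℝ, 0 ≤ t → t • c ∈ C)
    (hfC : ∀ x₁ ∈ X, ∀ x₂ ∈ X, ∀ t : ℝ, 0 ≤ t → t ≤ 1 →
      (t • f x₁ + (1 - t) • f x₂) - f (t • x₁ + (1 - t) • x₂) ∈ C)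
    (P : Set (EuclideanSpace ℝ (Fin q))) (hP : P = f '' X + C)
    (D : Set ((EuclideanSpace ℝ (Fin q)) × ℝ))
    (hD : D = {p | (∀ c ∈ C, 0 ≤ ⟪p.1, c⟫) ∧
      p.2 ≤ sInf ((fun x => ⟪p.1, f x⟫) '' X)})
    (N : EuclideanSpace ℝ (Fin q) → ℝ)
    (hNtri : ∀ x y, N (x + y) ≤ N x + N y)
    (hNsmul : ∀ (c : ℝ) x, N (c • x) = |c| * N x)
    (hNdef : ∀ x, N x = 0 → x = 0)
    (Nd : EuclideanSpace ℝ (Fin q) → ℝ)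
    (hNd : ∀ w, Nd w = sSup ((fun x => ⟪w, x⟫) '' {x | N x ≤ 1}))
    (ε : ℝ) (hε : 0 < ε)
    (Xbar : Set (Fin m → ℝ)) (hXbar : Xbar ⊆ X)
    (hXbarne : Xbar.Nonempty) (hXbarfin : Xbar.Finite)
    (Pε : Set (EuclideanSpace ℝ (Fin q)))
    (hPε : Pε = convexHull ℝ (f '' Xbar) + C + {z | N z ≤ ε})
    (hinf : P ⊆ Pε)
    (Dε : Set ((EuclideanSpace ℝ (Fin q)) × ℝ))
    (hDε : Dε = {p | ∀ y ∈ Pε, p.2 ≤ ⟪p.1, y⟫}) :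
    D ⊆ {p : (EuclideanSpace ℝ (Fin q)) × ℝ |
        ∃ s : ℝ, 0 ≤ s ∧ ∃ u ∈ Dε, Nd u.1 = 1 ∧
          ∃ t : ℝ, 0 ≤ t ∧ p = s • ((u.1, u.2 + ε) : (EuclideanSpace ℝ (Fin q)) × ℝ)
            - ((0, t) : (EuclideanSpace ℝ (Fin q)) × ℝ)} ∧
      Dε ⊆ D :=
  stmt_18_general m q X hXne f C hCne hCnetriv hCcl hCconv hCcone P hP D hD N hNtri hNsmul hNdef Nd
    hNd ε Xbar hXbar hXbarfin Pε hPε hinf Dε hDε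
end
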